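/- Let X be a Banach space and let (A_m)_{m∈ℤ} be a sequence of bounded linear operators on X admitting an exponential trichotomy with constants C, λ > 0. Let f_n : X → X (n ∈ ℤ) satisfy ‖f_n(x) − f_n(y)‖ ≤ c‖x − y‖ for all n, x, y, where 0 < c < (1−e^{−λ})/(2C(1+e^{−λ})); set F_n = A_n + f_n. Then the system x_{n+1} = F_n(x_n) has the ℓ^∞-Lipschitz shadowing property: there exists K > 0 such that for every ε > 0 and every sequence (y_n)_{n∈ℤ} ⊂ X with sup_{n∈ℤ} ‖y_{n+1} − F_n(y_n)‖ ≤ ε/K, there exists a sequence (x_n)_{n∈ℤ} with x_{n+1} = F_n(x_n) for all n ∈ ℤ and sup_{n∈ℤ} ‖x_n − y_n‖ ≤ ε. -/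

import Mathlib

open scoped ENNReal

/-- The forward products `𝒜(m,n) = A_{m-1} ⋯ A_n` (equal to the identity when `m ≤ n`). -/
noncomputable def calA {X : Type*} [NormedAddCommGroup X] [NormedSpace ℝ X]
    (A : ℤ → X →L[ℝ] X) (m n : ℤ) : X →L[ℝ] X :=
  (List.range (m - n).toNat).foldl (fun B k => (A (n + (k : ℤ))).comp B)
    (ContinuousLinearMap.id ℝ X)

/-- The sequence `(A_m)_{m ∈ ℤ}` admits an exponential trichotomy with constants `C, lam > 0`.
The projections are `P 0 = P¹` (stable), `P 1 = P²` (unstable) and `P 2 = P³` (central).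
For `m ≤ n`, the operator `𝒜(m,n)` (the inverse of `𝒜(n,m)` restricted to `Ker P¹_m`)
is described implicitly: `w = 𝒜(m,n) P^i_n x` iff `w ∈ Ker P¹_m` and `𝒜(n,m) w = P^i_n x`. -/
def ExpTrichotomy {X : Type*} [NormedAddCommGroup X] [NormedSpace ℝ X]
    (A : ℤ → X →L[ℝ] X) (C lam : ℝ) : Prop :=
  ∃ P : Fin 3 → ℤ → X →L[ℝ] X,
    (∀ m, P 0 m + P 1 m + P 2 m = ContinuousLinearMap.id ℝ X) ∧
    (∀ i m, (P i m).comp (P i m) = P i m) ∧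
    (∀ i j m, i ≠ j → (P i m).comp (P j m) = 0) ∧
    (∀ i m, (P i (m + 1)).comp (A m) = (A m).comp (P i m)) ∧
    (∀ m, Set.BijOn (A m) (LinearMap.ker (P 0 m : X →ₗ[ℝ] X) : Set X)
      (LinearMap.ker (P 0 (m + 1) : X →ₗ[ℝ] X) : Set X)) ∧
    (∀ m n : ℤ, n ≤ m → ‖(calA A m n).comp (P 0 n)‖ ≤ C * Real.exp (-lam * (m - n))) ∧
    (∀ m n : ℤ, m ≤ n → ∀ x w : X, w ∈ LinearMap.ker (P 0 m : X →ₗ[ℝ] X) →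
      calA A n m w = P 1 n x → ‖w‖ ≤ C * Real.exp (-lam * (n - m)) * ‖x‖) ∧
    (∀ m n : ℤ, n ≤ m → ‖(calA A m n).comp (P 2 n)‖ ≤ C * Real.exp (-lam * (m - n))) ∧
    (∀ m n : ℤ, m ≤ n → ∀ x w : X, w ∈ LinearMap.ker (P 0 m : X →ₗ[ℝ] X) →
      calA A n m w = P 2 n x → ‖w‖ ≤ C * Real.exp (-lam * (n - m)) * ‖x‖)

/-!
The Green function of the trichotomy, `G(n, m) = 𝒜(n, m) (P¹ + P³)_m` for `m ≤ n` and
`G(n, m) = -𝒜(n, m) P²_m` for `m > n`, decays like `e^{-λ|n-m|}`, so `a ↦ (∑_m G(n, m+1) a_m)_n`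
is a bounded operator `𝒢` on `ℓ^∞(ℤ, X)`, of norm at most `L = C (2 + e^{-λ}) / (1 - e^{-λ})`,
sending `a` to a solution of `z_{n+1} = A_n z_n + a_n`. For a pseudo-orbit `y`, the orbits `y + z`
are the fixed points of `z ↦ 𝒢 (f_n(y_n + z_n) - f_n(y_n) - (y_{n+1} - F_n(y_n)))_n`; the smallness
of `c` makes `cL < 1`, so this map is a contraction and its fixed point lies within
`L (ε / K) / (1 - cL) = ε` of `0` when `K = L / (1 - cL)`.
-/

open scoped BoundedContinuousFunction

section calA

variable {X : Type*} [NormedAddCommGroup X] [NormedSpace ℝ X] (A : ℤ → X →L[ℝ] X)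

@[simp]
lemma calA_self (n : ℤ) : calA A n n = ContinuousLinearMap.id ℝ X := by
  simp [calA]

lemma calA_succ {m n : ℤ} (h : m ≤ n) : calA A (n + 1) m = (A n).comp (calA A n m) := by
  have hlen : (n + 1 - m).toNat = (n - m).toNat + 1 := by omega
  have hlast : m + (((n - m).toNat : ℕ) : ℤ) = n := by omega
  rw [calA, calA, hlen, List.range_succ]
  simp only [List.bind_eq_flatMap, List.flatMap_append, List.flatMap_cons, List.flatMap_nil,
    List.append_nil, List.pure_def, List.foldl_append, List.foldl_cons, List.foldl_nil, hlast]

lemma calA_succ_apply {m n : ℤ} (h : m ≤ n) (x : X) :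
    calA A (n + 1) m x = A n (calA A n m x) := by
  rw [calA_succ A h, ContinuousLinearMap.comp_apply]

lemma calA_eq_comp_succ {m n : ℤ} (h : m < n) : calA A n m = (calA A n (m + 1)).comp (A m) := by
  induction n, h using Int.leInduction with
  | base => rw [calA_succ A le_rfl, calA_self, calA_self]; rfl
  | succ n hmn ih =>
    rw [calA_succ A (by omega), calA_succ A hmn, ih, ContinuousLinearMap.comp_assoc]

lemma calA_bijOn (S : ℤ → Set X) (hS : ∀ k, Set.BijOn (A k) (S k) (S (k + 1)))
    {m n : ℤ} (h : m ≤ n) : Set.BijOn (calA A n m) (S m) (S n) := by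
  induction n, h using Int.leInduction with
  | base => simpa using Set.bijOn_id (S m)
  | succ n hmn ih => rw [calA_succ A hmn, ContinuousLinearMap.coe_comp]; exact (hS n).comp ih

end calA

section SeriesOperator

variable {X : Type*} [NormedAddCommGroup X] [NormedSpace ℝ X]
  {S : ℤ → ℕ → X →ₗ[ℝ] X} {w : ℕ → ℝ}

lemma norm_tsum_series_apply_le (hw : Summable w) (hw0 : ∀ j, 0 ≤ w j)
    (hS : ∀ n j x, ‖S n j x‖ ≤ w j * ‖x‖) (n : ℤ) (ι : ℕ → ℤ) (a : ℤ →ᵇ X) :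
    ‖∑' j, S n j (a (ι j))‖ ≤ (∑' j, w j) * ‖a‖ :=
  tsum_of_norm_bounded (hw.hasSum.mul_right ‖a‖) fun j =>
    (hS n j _).trans (mul_le_mul_of_nonneg_left (a.norm_coe_le_norm _) (hw0 j))

lemma summable_series_apply [CompleteSpace X] (hw : Summable w) (hw0 : ∀ j, 0 ≤ w j)
    (hS : ∀ n j x, ‖S n j x‖ ≤ w j * ‖x‖) (n : ℤ) (ι : ℕ → ℤ) (a : ℤ →ᵇ X) :
    Summable fun j => S n j (a (ι j)) :=
  .of_norm_bounded (hw.mul_right ‖a‖) fun j =>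
    (hS n j _).trans (mul_le_mul_of_nonneg_left (a.norm_coe_le_norm _) (hw0 j))

noncomputable def seriesOp [CompleteSpace X] (S : ℤ → ℕ → X →ₗ[ℝ] X) (ι : ℤ → ℕ → ℤ)
    (hw : Summable w) (hw0 : ∀ j, 0 ≤ w j) (hS : ∀ n j x, ‖S n j x‖ ≤ w j * ‖x‖) :
    (ℤ →ᵇ X) →L[ℝ] (ℤ →ᵇ X) :=
  LinearMap.mkContinuous
    { toFun := fun a => .ofNormedAddCommGroupDiscrete (fun n => ∑' j, S n j (a (ι n j)))
        ((∑' j, w j) * ‖a‖) fun n => norm_tsum_series_apply_le hw hw0 hS n (ι n) a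
      map_add' := fun a b => by
        ext n
        simp only [BoundedContinuousFunction.coe_add, Pi.add_apply, map_add]
        exact (summable_series_apply hw hw0 hS n (ι n) a).tsum_add
          (summable_series_apply hw hw0 hS n (ι n) b)
      map_smul' := fun r a => by
        ext n
        simp only [BoundedContinuousFunction.coe_smul, map_smul, RingHom.id_apply]
        exact (summable_series_apply hw hw0 hS n (ι n) a).tsum_const_smul r }
    (∑' j, w j) fun a => BoundedContinuousFunction.norm_le_of_nonempty.2 fun n =>
      norm_tsum_series_apply_le hw hw0 hS n (ι n) a

lemma norm_seriesOp_le [CompleteSpace X] (ι : ℤ → ℕ → ℤ) (hw : Summable w) (hw0 : ∀ j, 0 ≤ w j)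
    (hS : ∀ n j x, ‖S n j x‖ ≤ w j * ‖x‖) : ‖seriesOp S ι hw hw0 hS‖ ≤ ∑' j, w j :=
  LinearMap.mkContinuous_norm_le _ (tsum_nonneg hw0) _

end SeriesOperator

lemma Real.exp_neg_mul_sub_eq_pow (lam : ℝ) {m n : ℤ} {j : ℕ} (h : n - m = j) :
    Real.exp (-lam * (n - m)) = Real.exp (-lam) ^ j := by
  rw [← Real.exp_nat_mul, show ((n : ℝ) - m) = j by exact_mod_cast h, mul_comm]

lemma summable_exp_neg_pow {lam : ℝ} (hlam : 0 < lam) :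
    Summable fun j : ℕ => Real.exp (-lam) ^ j :=
  summable_geometric_of_lt_one (Real.exp_pos _).le (Real.exp_lt_one_iff.2 (by linarith))

namespace ExpTrichotomy

variable {X : Type*} [NormedAddCommGroup X] [NormedSpace ℝ X] {A : ℤ → X →L[ℝ] X} {C lam : ℝ}
  (h : ExpTrichotomy A C lam)

/-- `h.proj 0`, `h.proj 1`, `h.proj 2` are the paper's `P¹`, `P²`, `P³`. -/
noncomputable def proj : Fin 3 → ℤ → X →L[ℝ] X :=
  h.choose

lemma proj_add_proj_add_proj (m : ℤ) :
    h.proj 0 m + h.proj 1 m + h.proj 2 m = ContinuousLinearMap.id ℝ X :=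
  h.choose_spec.1 m

lemma proj_zero_proj_one (m : ℤ) (x : X) : h.proj 0 m (h.proj 1 m x) = 0 :=
  DFunLike.congr_fun (h.choose_spec.2.2.1 0 1 m (by decide)) x

lemma bijOn_ker (m : ℤ) :
    Set.BijOn (A m) (LinearMap.ker (h.proj 0 m : X →ₗ[ℝ] X) : Set X)
      (LinearMap.ker (h.proj 0 (m + 1) : X →ₗ[ℝ] X) : Set X) :=
  h.choose_spec.2.2.2.2.1 m

lemma norm_calA_comp_proj_zero_le {m n : ℤ} (hnm : n ≤ m) :
    ‖(calA A m n).comp (h.proj 0 n)‖ ≤ C * Real.exp (-lam * (m - n)) :=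
  h.choose_spec.2.2.2.2.2.1 m n hnm

lemma norm_le_of_calA_eq_proj_one {m n : ℤ} (hmn : m ≤ n) {x w : X}
    (hw : w ∈ LinearMap.ker (h.proj 0 m : X →ₗ[ℝ] X)) (hx : calA A n m w = h.proj 1 n x) :
    ‖w‖ ≤ C * Real.exp (-lam * (n - m)) * ‖x‖ :=
  h.choose_spec.2.2.2.2.2.2.1 m n hmn x w hw hx

lemma norm_calA_comp_proj_two_le {m n : ℤ} (hnm : n ≤ m) :
    ‖(calA A m n).comp (h.proj 2 n)‖ ≤ C * Real.exp (-lam * (m - n)) :=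
  h.choose_spec.2.2.2.2.2.2.2.1 m n hnm

lemma bijOn_calA_ker {m n : ℤ} (hmn : m ≤ n) :
    Set.BijOn (calA A n m) (LinearMap.ker (h.proj 0 m : X →ₗ[ℝ] X) : Set X)
      (LinearMap.ker (h.proj 0 n : X →ₗ[ℝ] X) : Set X) :=
  calA_bijOn A _ h.bijOn_ker hmn

/-- The paper's `𝒜(m,n) P²_n` for `m ≤ n` (and `0` otherwise). -/
noncomputable def backward (m n : ℤ) : X →ₗ[ℝ] X :=
  if hmn : m ≤ n then
    (LinearMap.ker (h.proj 0 m : X →ₗ[ℝ] X)).subtype ∘ₗ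
      (LinearEquiv.ofBijective
        ((calA A n m : X →ₗ[ℝ] X).restrict fun _ hx => (h.bijOn_calA_ker hmn).mapsTo hx)
        (h.bijOn_calA_ker hmn).bijective).symm.toLinearMap ∘ₗ
      (h.proj 1 n : X →ₗ[ℝ] X).codRestrict _ (h.proj_zero_proj_one n)
  else 0

lemma backward_mem_ker {m n : ℤ} (hmn : m ≤ n) (x : X) :
    h.backward m n x ∈ LinearMap.ker (h.proj 0 m : X →ₗ[ℝ] X) := by
  simp only [backward, dif_pos hmn]
  exact Submodule.coe_mem _

lemma calA_backward {m n : ℤ} (hmn : m ≤ n) (x : X) :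
    calA A n m (h.backward m n x) = h.proj 1 n x := by
  simp only [backward, dif_pos hmn]
  set e := LinearEquiv.ofBijective
    ((calA A n m : X →ₗ[ℝ] X).restrict fun _ hx => (h.bijOn_calA_ker hmn).mapsTo hx)
    (h.bijOn_calA_ker hmn).bijective
  exact congr($(e.apply_symm_apply
    ((h.proj 1 n : X →ₗ[ℝ] X).codRestrict _ (h.proj_zero_proj_one n) x)).1)

lemma eq_backward {m n : ℤ} (hmn : m ≤ n) {x w : X}
    (hw : w ∈ LinearMap.ker (h.proj 0 m : X →ₗ[ℝ] X)) (hx : calA A n m w = h.proj 1 n x) :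
    w = h.backward m n x :=
  (h.bijOn_calA_ker hmn).injOn hw (h.backward_mem_ker hmn x)
    (hx.trans (h.calA_backward hmn x).symm)

lemma norm_backward_le {m n : ℤ} (hmn : m ≤ n) (x : X) :
    ‖h.backward m n x‖ ≤ C * Real.exp (-lam * (n - m)) * ‖x‖ :=
  h.norm_le_of_calA_eq_proj_one hmn (h.backward_mem_ker hmn x) (h.calA_backward hmn x)

lemma backward_self (n : ℤ) (x : X) : h.backward n n x = h.proj 1 n x :=
  (h.eq_backward le_rfl (h.proj_zero_proj_one n x) (by simp)).symm

lemma apply_backward {m n : ℤ} (hmn : m < n) (x : X) :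
    A m (h.backward m n x) = h.backward (m + 1) n x :=
  h.eq_backward hmn ((h.bijOn_ker m).mapsTo (h.backward_mem_ker hmn.le x)) <| by
    rw [← ContinuousLinearMap.comp_apply, ← calA_eq_comp_succ A hmn, h.calA_backward hmn.le]

lemma norm_calA_comp_proj_zero_add_proj_two_le (n : ℤ) (j : ℕ) (x : X) :
    ‖calA A n (n - j) ((h.proj 0 (n - j) + h.proj 2 (n - j)) x)‖ ≤
      2 * C * Real.exp (-lam) ^ j * ‖x‖ := by
  have hj : n - j ≤ n := by omega
  have hexp := Real.exp_neg_mul_sub_eq_pow lam (show n - (n - j) = j by ring)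
  calc ‖calA A n (n - j) ((h.proj 0 (n - j) + h.proj 2 (n - j)) x)‖
      = ‖(calA A n (n - j)).comp (h.proj 0 (n - j)) x
          + (calA A n (n - j)).comp (h.proj 2 (n - j)) x‖ := by simp
    _ ≤ C * Real.exp (-lam) ^ j * ‖x‖ + C * Real.exp (-lam) ^ j * ‖x‖ := by
      refine norm_add_le_of_le ?_ ?_ <;> refine ContinuousLinearMap.le_of_opNorm_le _ ?_ x
      · exact hexp ▸ h.norm_calA_comp_proj_zero_le hj
      · exact hexp ▸ h.norm_calA_comp_proj_two_le hj
    _ = 2 * C * Real.exp (-lam) ^ j * ‖x‖ := by ring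

lemma norm_backward_add_le (n : ℤ) (j : ℕ) (x : X) :
    ‖h.backward n (n + 1 + j) x‖ ≤ C * Real.exp (-lam) ^ (j + 1) * ‖x‖ :=
  Real.exp_neg_mul_sub_eq_pow lam (show n + 1 + j - n = (j + 1 : ℕ) by push_cast; ring) ▸
    h.norm_backward_le (by omega) x

variable [CompleteSpace X]

lemma summable_greenPast_terms (hC : 0 ≤ C) (hlam : 0 < lam) (a : ℤ →ᵇ X) (n : ℤ) :
    Summable fun j : ℕ =>
      calA A n (n - j) ((h.proj 0 (n - j) + h.proj 2 (n - j)) (a (n - j - 1))) :=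
  summable_series_apply ((summable_exp_neg_pow hlam).mul_left (2 * C)) (fun _ => by positivity)
    (S := fun n j =>
      ((calA A n (n - j)).comp (h.proj 0 (n - j) + h.proj 2 (n - j)) : X →ₗ[ℝ] X))
    (fun n j x => h.norm_calA_comp_proj_zero_add_proj_two_le n j x) n _ a

lemma summable_greenFuture_terms (hC : 0 ≤ C) (hlam : 0 < lam) (a : ℤ →ᵇ X) (n : ℤ) :
    Summable fun j : ℕ => h.backward n (n + 1 + j) (a (n + j)) :=
  summable_series_apply (((summable_nat_add_iff 1).2 (summable_exp_neg_pow hlam)).mul_left C)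
    (fun _ => by positivity) h.norm_backward_add_le n _ a

variable (hC : 0 ≤ C) (hlam : 0 < lam)

noncomputable def greenPast : (ℤ →ᵇ X) →L[ℝ] (ℤ →ᵇ X) :=
  seriesOp
    (fun n j => ((calA A n (n - j)).comp (h.proj 0 (n - j) + h.proj 2 (n - j)) : X →ₗ[ℝ] X))
    (fun n j => n - j - 1) ((summable_exp_neg_pow hlam).mul_left (2 * C)) (fun _ => by positivity)
    fun n j x => h.norm_calA_comp_proj_zero_add_proj_two_le n j x

noncomputable def greenFuture : (ℤ →ᵇ X) →L[ℝ] (ℤ →ᵇ X) :=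
  seriesOp (fun n j => h.backward n (n + 1 + j)) (fun n j => n + j)
    (((summable_nat_add_iff 1).2 (summable_exp_neg_pow hlam)).mul_left C) (fun _ => by positivity)
    h.norm_backward_add_le

noncomputable def green : (ℤ →ᵇ X) →L[ℝ] (ℤ →ᵇ X) :=
  h.greenPast hC hlam - h.greenFuture hC hlam

lemma norm_green_le :
    ‖h.green hC hlam‖ ≤ C * (2 + Real.exp (-lam)) / (1 - Real.exp (-lam)) := by
  set q := Real.exp (-lam)
  have hq : q < 1 := Real.exp_lt_one_iff.2 (by linarith)
  have hgeom : ∑' j : ℕ, q ^ j = (1 - q)⁻¹ := tsum_geometric_of_lt_one (Real.exp_pos _).le hq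
  calc ‖h.green hC hlam‖ ≤ ‖h.greenPast hC hlam‖ + ‖h.greenFuture hC hlam‖ := norm_sub_le _ _
    _ ≤ (∑' j : ℕ, 2 * C * q ^ j) + ∑' j : ℕ, C * q ^ (j + 1) :=
      add_le_add (norm_seriesOp_le ..) (norm_seriesOp_le ..)
    _ = C * (2 + q) / (1 - q) := by
      simp only [tsum_mul_left, pow_succ, tsum_mul_right, hgeom]
      field_simp [(sub_pos.2 hq).ne']

lemma greenPast_apply (a : ℤ →ᵇ X) (n : ℤ) :
    h.greenPast hC hlam a n =
      ∑' j : ℕ, calA A n (n - j) ((h.proj 0 (n - j) + h.proj 2 (n - j)) (a (n - j - 1))) :=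
  rfl

lemma greenFuture_apply (a : ℤ →ᵇ X) (n : ℤ) :
    h.greenFuture hC hlam a n = ∑' j : ℕ, h.backward n (n + 1 + j) (a (n + j)) :=
  rfl

lemma greenPast_apply_succ (a : ℤ →ᵇ X) (n : ℤ) :
    h.greenPast hC hlam a (n + 1) =
      (h.proj 0 (n + 1) + h.proj 2 (n + 1)) (a n) + A n (h.greenPast hC hlam a n) := by
  have hshift (j : ℕ) : n + 1 - ((j + 1 : ℕ) : ℤ) = n - j := by push_cast; ring
  rw [greenPast_apply, (h.summable_greenPast_terms hC hlam a (n + 1)).tsum_eq_zero_add,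
    greenPast_apply, ContinuousLinearMap.map_tsum _ (h.summable_greenPast_terms hC hlam a n)]
  simp only [hshift, Nat.cast_zero, sub_zero, add_sub_cancel_right, calA_self,
    ContinuousLinearMap.id_apply]
  congr 1
  exact tsum_congr fun j => calA_succ_apply A (by omega) _

lemma apply_greenFuture (a : ℤ →ᵇ X) (n : ℤ) :
    A n (h.greenFuture hC hlam a n) =
      h.proj 1 (n + 1) (a n) + h.greenFuture hC hlam a (n + 1) := by
  have hsum := h.summable_greenFuture_terms hC hlam a n
  have hterm (j : ℕ) : A n (h.backward n (n + 1 + j) (a (n + j))) =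
      h.backward (n + 1) (n + 1 + j) (a (n + j)) :=
    h.apply_backward (by omega) _
  rw [greenFuture_apply, greenFuture_apply, ContinuousLinearMap.map_tsum _ hsum,
    tsum_congr hterm, ((hsum.mapL (A n)).congr hterm).tsum_eq_zero_add]
  simp only [Nat.cast_zero, add_zero, backward_self]
  congr 1
  exact tsum_congr fun j => by push_cast; ring_nf

lemma green_apply_succ (a : ℤ →ᵇ X) (n : ℤ) :
    h.green hC hlam a (n + 1) = A n (h.green hC hlam a n) + a n := by
  have hid := DFunLike.congr_fun (h.proj_add_proj_add_proj (n + 1)) (a n)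
  simp only [add_apply, ContinuousLinearMap.id_apply] at hid
  simp only [green, sub_apply, BoundedContinuousFunction.coe_sub, Pi.sub_apply, map_sub,
    h.greenPast_apply_succ, add_apply]
  rw [h.apply_greenFuture]
  linear_combination (norm := abel) hid

end ExpTrichotomy

section Shadowing

variable {X : Type*} [NormedAddCommGroup X] [NormedSpace ℝ X] [CompleteSpace X]
  {A : ℤ → X →L[ℝ] X} {f : ℤ → X → X} {c L η : ℝ}

theorem exists_orbit_near_of_solutionOperator (G : (ℤ →ᵇ X) →L[ℝ] (ℤ →ᵇ X))
    (hGL : ‖G‖ ≤ L) (hG : ∀ a n, G a (n + 1) = A n (G a n) + a n) (hc : 0 ≤ c)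
    (hf : ∀ n x y, ‖f n x - f n y‖ ≤ c * ‖x - y‖) (hcL : c * L < 1)
    (y : ℤ → X) (hy : ∀ n, ‖y (n + 1) - (A n (y n) + f n (y n))‖ ≤ η) :
    ∃ x : ℤ → X, (∀ n, x (n + 1) = A n (x n) + f n (x n)) ∧
      ∀ n, ‖x n - y n‖ ≤ L * η / (1 - c * L) := by
  have hcL0 : 0 ≤ c * L := mul_nonneg hc ((norm_nonneg G).trans hGL)
  have hincr (z : ℤ →ᵇ X) k : ‖f k (y k + z k) - f k (y k)‖ ≤ c * ‖z‖ := by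
    simpa using (hf k (y k + z k) (y k)).trans
      (mul_le_mul_of_nonneg_left (by simpa using z.norm_coe_le_norm k) hc)
  -- `x = y + z` is an orbit iff `z_{n+1} = A_n z_n + (incr z)_n - defect_n`.
  let defect : ℤ →ᵇ X := .ofNormedAddCommGroupDiscrete _ η hy
  let incr (z : ℤ →ᵇ X) : ℤ →ᵇ X := .ofNormedAddCommGroupDiscrete _ _ (hincr z)
  have hincr_sub (z w : ℤ →ᵇ X) : ‖incr z - incr w‖ ≤ c * ‖z - w‖ :=
    BoundedContinuousFunction.norm_le_of_nonempty.2 fun k => by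
      simpa [incr] using (hf k (y k + z k) (y k + w k)).trans
        (mul_le_mul_of_nonneg_left (by simpa using (z - w).norm_coe_le_norm k) hc)
  let T (z : ℤ →ᵇ X) : ℤ →ᵇ X := G (incr z - defect)
  have hT : ContractingWith (c * L).toNNReal T := by
    refine ⟨by simpa [Real.toNNReal_lt_one] using hcL, LipschitzWith.of_dist_le_mul fun z w => ?_⟩
    calc dist (T z) (T w) = ‖G (incr z - incr w)‖ := by simp [T, dist_eq_norm, ← map_sub]
      _ ≤ L * (c * ‖z - w‖) := G.le_of_opNorm_le hGL _ |>.trans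
          (mul_le_mul_of_nonneg_left (hincr_sub z w) ((norm_nonneg G).trans hGL))
      _ = (c * L).toNNReal * dist z w := by rw [Real.coe_toNNReal _ hcL0, dist_eq_norm]; ring
  set z := ContractingWith.fixedPoint T hT
  have hz : T z = z := hT.fixedPoint_isFixedPt
  refine ⟨fun n => y n + z n, fun n => ?_, fun n => ?_⟩
  · have hrec := hG (incr z - defect) n
    rw [show G (incr z - defect) = z from hz] at hrec
    simp only [hrec, map_add, BoundedContinuousFunction.coe_sub, Pi.sub_apply, incr, defect,
      BoundedContinuousFunction.coe_ofNormedAddCommGroupDiscrete]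
    abel
  · have hT0 : ‖T 0‖ ≤ L * η := by
      refine G.le_of_opNorm_le hGL _ |>.trans
        (mul_le_mul_of_nonneg_left ?_ ((norm_nonneg G).trans hGL))
      exact BoundedContinuousFunction.norm_le_of_nonempty.2 fun k => by
        simpa [incr, defect, norm_sub_rev] using hy k
    calc ‖y n + z n - y n‖ = ‖z n‖ := by rw [add_sub_cancel_left]
      _ ≤ dist 0 z := by rw [dist_zero_left]; exact z.norm_coe_le_norm n
      _ ≤ dist 0 (T 0) / (1 - (c * L).toNNReal) := hT.dist_fixedPoint_le 0
      _ ≤ L * η / (1 - c * L) := by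
        rw [Real.coe_toNNReal _ hcL0, dist_zero_left]
        gcongr

end Shadowing

lemma mul_div_one_sub_lt_one {C c q : ℝ} (hC : 0 < C) (hq0 : 0 ≤ q) (hq1 : q < 1)
    (hc : c < (1 - q) / (2 * C * (1 + q))) : c * (C * (2 + q) / (1 - q)) < 1 := by
  rw [lt_div_iff₀ (by positivity)] at hc
  rw [mul_div_assoc', div_lt_one (sub_pos.2 hq1)]
  nlinarith

/-- Theorem 3.3 (Theorem `cor: uniqueness`): if `(A_m)_{m∈ℤ}` admits an exponential trichotomy
with constants `C, lam > 0` and the `f_n` are `c`-Lipschitz with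
`0 < c < (1-e^{-lam})/(2C(1+e^{-lam}))`, then the system `x_{n+1} = A_n x_n + f_n(x_n)` has
the `ℓ^∞`-Lipschitz shadowing property. -/
theorem trichotomy_lipschitz_shadowing
    {X : Type*} [NormedAddCommGroup X] [NormedSpace ℝ X] [CompleteSpace X]
    (A : ℤ → X →L[ℝ] X) (C lam : ℝ) (hC : 0 < C) (hlam : 0 < lam)
    (h : ExpTrichotomy A C lam)
    (f : ℤ → X → X) (c : ℝ) (hc : 0 < c)
    (hcsmall : c < (1 - Real.exp (-lam)) / (2 * C * (1 + Real.exp (-lam))))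
    (hf : ∀ n : ℤ, ∀ x y : X, ‖f n x - f n y‖ ≤ c * ‖x - y‖) :
    ∃ K : ℝ, 0 < K ∧ ∀ ε : ℝ, 0 < ε → ∀ y : ℤ → X,
      (∀ n : ℤ, ‖y (n + 1) - (A n (y n) + f n (y n))‖ ≤ ε / K) →
      ∃ x : ℤ → X, (∀ n : ℤ, x (n + 1) = A n (x n) + f n (x n)) ∧
        ∀ n : ℤ, ‖x n - y n‖ ≤ ε := by
  have hq1 : Real.exp (-lam) < 1 := Real.exp_lt_one_iff.2 (by linarith)
  obtain ⟨L, hGL, hL, hcL⟩ : ∃ L, ‖h.green hC.le hlam‖ ≤ L ∧ 0 < L ∧ c * L < 1 :=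
    ⟨_, h.norm_green_le hC.le hlam, div_pos (by positivity) (sub_pos.2 hq1),
      mul_div_one_sub_lt_one hC (Real.exp_pos _).le hq1 hcsmall⟩
  refine ⟨L / (1 - c * L), div_pos hL (sub_pos.2 hcL), fun ε _ y hy => ?_⟩
  obtain ⟨x, hx, hxy⟩ :=
    exists_orbit_near_of_solutionOperator _ hGL (h.green_apply_succ hC.le hlam) hc.le hf hcL
      y hy
  refine ⟨x, hx, fun n => (hxy n).trans_eq ?_⟩
  rw [mul_comm c L] at hcL ⊢
  field_simp [(sub_pos.2 hcL).ne']
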